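/- Let G = (V,E) be a graph and let G' be the graph obtained from G by adding, for each vertex v ∈ V, n² new degree-one vertices adjacent only to v, where n = |V|. Let k' = k·(n² + n). Then G has a feedback vertex set of size at most k if and only if G' has a feedback vertex set S with |N_{G'}[S]| ≤ k'. -/

import Mathlib

/-- Closed neighborhood of a vertex set. -/
def closedNbhd {V : Type*} (G : SimpleGraph V) (S : Set V) : Set V :=
  S ∪ {v | ∃ u ∈ S, G.Adj u v}

/-- `S` is a feedback vertex set of `G`: every cycle of `G` contains a vertex of `S`. -/
def IsFVS {V : Type*} (G : SimpleGraph V) (S : Set V) : Prop :=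
  ∀ (v : V) (w : G.Walk v v), w.IsCycle → ∃ x ∈ w.support, x ∈ S

/-- The graph `G'` obtained from `G` by attaching `m` new degree-one neighbors
(encoded `Sum.inr (v, i)`) to each vertex `v`. -/
def addPendants {V : Type*} (G : SimpleGraph V) (m : ℕ) :
    SimpleGraph (V ⊕ V × Fin m) :=
  SimpleGraph.fromRel (fun a b =>
    match a, b with
    | Sum.inl a, Sum.inl b => G.Adj a b
    | Sum.inl a, Sum.inr (w, _) => a = w
    | _, _ => False)

/-!
A cycle of `G'` never passes through a pendant vertex (its only neighbour would have to be both
the successor and the predecessor on the cycle), so the cycles of `G'` are exactly the cycles of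
`G`: a feedback vertex set of `G` stays one in `G'`, and `S' ↦ S' ∩ V` sends feedback vertex sets
of `G'` to feedback vertex sets of `G`.
Every original vertex has at most `n + n²` closed neighbours in `G'`, giving
`|N[S]| ≤ k (n² + n)` for `|S| ≤ k`. Conversely each `v ∈ S' ∩ V` contributes itself and its `n²`
private pendants to `N[S']`, so `|S' ∩ V| (n² + 1) ≤ k (n² + n)`, which forces `|S' ∩ V| ≤ k`
because `|S' ∩ V| ≤ n`.
-/

open SimpleGraph

namespace SimpleGraph.Walk

lemma IsCycle.not_subsingleton_neighborSet {V : Type*} {G : SimpleGraph V} {u : V}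
    {p : G.Walk u u} (hp : p.IsCycle) : ¬ (G.neighborSet u).Subsingleton := fun h =>
  hp.snd_ne_penultimate <| h (p.adj_snd hp.not_nil) (p.adj_penultimate hp.not_nil).symm

end SimpleGraph.Walk

namespace IsFVS

variable {V W : Type*} {G : SimpleGraph V} {G' : SimpleGraph W}

lemma preimage (f : G ↪g G') {S' : Set W} (hS' : IsFVS G' S') : IsFVS G (f ⁻¹' S') := by
  intro v p hp
  obtain ⟨_, hx, hxS'⟩ := hS' _ _ (hp.map (f := f.toHom) f.injective)
  rw [Walk.support_map] at hx
  obtain ⟨u, hu, rfl⟩ := List.mem_map.mp hx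
  exact ⟨u, hu, hxS'⟩

lemma image (f : G ↪g G') {S : Set V} (hS : IsFVS G S)
    (hf : ∀ (w : W) (c : G'.Walk w w), c.IsCycle → w ∈ Set.range f) : IsFVS G' (f '' S) := by
  classical
  intro w c hc
  have hrange : ∀ x ∈ c.support, x ∈ Set.range f := fun x hx => hf x _ (hc.rotate hx)
  -- `c` lives in the subgraph induced on the range of `f`, which is isomorphic to `G`.
  set c' := c.induce _ hrange
  have hc' : c'.IsCycle := Walk.IsCycle.of_map (f := (Embedding.induce _).toHom)
    (by rwa [Walk.map_induce])
  let e := f.isoInduceRange.symm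
  obtain ⟨u, hu, huS⟩ := hS _ _ (hc'.map (f := e.toHom) e.injective)
  rw [Walk.support_map, Walk.support_induce] at hu
  obtain ⟨y, hy, rfl⟩ := List.mem_map.mp hu
  exact ⟨y, (List.mem_attachWith _ y).mp hy, ⟨_, huS, Equiv.apply_ofInjective_symm f.injective y⟩⟩

end IsFVS

section addPendants

variable {V : Type*} {G : SimpleGraph V} {m : ℕ}

@[simp]
lemma addPendants_adj_inl_inl {a b : V} :
    (addPendants G m).Adj (Sum.inl a) (Sum.inl b) ↔ G.Adj a b := by
  simp only [addPendants, fromRel_adj]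
  exact ⟨fun ⟨_, h⟩ => h.elim id Adj.symm, fun h => ⟨by simpa using h.ne, .inl h⟩⟩

@[simp]
lemma addPendants_adj_inr {x : V ⊕ V × Fin m} {p : V × Fin m} :
    (addPendants G m).Adj x (Sum.inr p) ↔ x = Sum.inl p.1 := by
  rcases x with a | q <;> simp [addPendants, eq_comm]

lemma addPendants_neighborSet_inr (p : V × Fin m) :
    (addPendants G m).neighborSet (Sum.inr p) = {Sum.inl p.1} := by
  ext x
  simp [(addPendants G m).adj_comm _ x]

variable (G m) in
def addPendantsEmbedding : G ↪g addPendants G m where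
  toFun := Sum.inl
  inj' := Sum.inl_injective
  map_rel_iff' := addPendants_adj_inl_inl

lemma addPendants_mem_range_inl_of_isCycle {x : V ⊕ V × Fin m}
    {c : (addPendants G m).Walk x x} (hc : c.IsCycle) : x ∈ Set.range Sum.inl := by
  rcases x with a | p
  · exact ⟨a, rfl⟩
  · exact (hc.not_subsingleton_neighborSet (by simp [addPendants_neighborSet_inr])).elim

lemma ncard_closedNbhd_addPendants_image_inl_le [Fintype V] (S : Set V) :
    (closedNbhd (addPendants G m) (Sum.inl '' S)).ncard ≤ S.ncard * (Fintype.card V + m) := by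
  let φ : V × (V ⊕ Fin m) → V ⊕ V × Fin m := fun p => p.2.map id (Prod.mk p.1)
  have hsub : closedNbhd (addPendants G m) (Sum.inl '' S) ⊆ φ '' (S ×ˢ Set.univ) := by
    rintro x (⟨v, hv, rfl⟩ | ⟨_, ⟨v, hv, rfl⟩, hadj⟩)
    · exact ⟨(v, Sum.inl v), ⟨hv, trivial⟩, rfl⟩
    · rcases x with b | ⟨w, i⟩
      · exact ⟨(v, Sum.inl b), ⟨hv, trivial⟩, rfl⟩
      · obtain rfl : v = w := Sum.inl.inj (addPendants_adj_inr.mp hadj)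
        exact ⟨(v, Sum.inr i), ⟨hv, trivial⟩, rfl⟩
  calc _ ≤ (φ '' (S ×ˢ Set.univ)).ncard := Set.ncard_le_ncard hsub
    _ ≤ (S ×ˢ (Set.univ : Set (V ⊕ Fin m))).ncard := Set.ncard_image_le
    _ = S.ncard * (Fintype.card V + m) := by
      rw [Set.ncard_prod, Set.ncard_univ, Nat.card_eq_fintype_card, Fintype.card_sum,
        Fintype.card_fin]

lemma ncard_preimage_inl_mul_le_ncard_closedNbhd_addPendants [Finite V]
    (S' : Set (V ⊕ V × Fin m)) :
    (Sum.inl ⁻¹' S').ncard * (m + 1) ≤ (closedNbhd (addPendants G m) S').ncard := by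
  let ψ : V × Option (Fin m) → V ⊕ V × Fin m := fun p =>
    p.2.elim (Sum.inl p.1) (fun i => Sum.inr (p.1, i))
  have hψ : Function.Injective ψ := by
    rintro ⟨v, _ | i⟩ ⟨w, _ | j⟩ h <;> simp_all [ψ]
  have hmaps : ∀ p ∈ (Sum.inl ⁻¹' S') ×ˢ Set.univ, ψ p ∈ closedNbhd (addPendants G m) S' := by
    rintro ⟨v, _ | i⟩ ⟨hv, -⟩
    · exact .inl hv
    · exact .inr ⟨Sum.inl v, hv, addPendants_adj_inr.mpr rfl⟩
  calc (Sum.inl ⁻¹' S').ncard * (m + 1)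
      = ((Sum.inl ⁻¹' S') ×ˢ (Set.univ : Set (Option (Fin m)))).ncard := by
        rw [Set.ncard_prod, Set.ncard_univ, Nat.card_eq_fintype_card, Fintype.card_option,
          Fintype.card_fin]
    _ ≤ _ := Set.ncard_le_ncard_of_injOn ψ hmaps hψ.injOn

end addPendants

lemma Nat.le_of_mul_sq_add_one_le {a k n : ℕ} (ha : a ≤ n)
    (h : a * (n ^ 2 + 1) ≤ k * (n ^ 2 + n)) : a ≤ k := by
  by_contra! hk
  nlinarith

theorem secluded_fvs_np_hardness_reduction {V : Type*} [Fintype V]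
    (G : SimpleGraph V) (k : ℕ) :
    (∃ S : Set V, IsFVS G S ∧ S.ncard ≤ k) ↔
      (∃ S' : Set (V ⊕ V × Fin ((Fintype.card V) ^ 2)),
        IsFVS (addPendants G ((Fintype.card V) ^ 2)) S' ∧
        (closedNbhd (addPendants G ((Fintype.card V) ^ 2)) S').ncard ≤
          k * ((Fintype.card V) ^ 2 + Fintype.card V)) := by
  set n := Fintype.card V
  let f := addPendantsEmbedding G (n ^ 2)
  constructor
  · rintro ⟨S, hS, hk⟩
    refine ⟨f '' S, hS.image f fun _ _ => addPendants_mem_range_inl_of_isCycle, ?_⟩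
    calc _ ≤ S.ncard * (n + n ^ 2) := ncard_closedNbhd_addPendants_image_inl_le S
      _ ≤ k * (n ^ 2 + n) := by rw [add_comm n]; gcongr
  · rintro ⟨S', hS', hk⟩
    refine ⟨f ⁻¹' S', hS'.preimage f, Nat.le_of_mul_sq_add_one_le (n := n) ?_ ?_⟩
    · simpa only [Nat.card_eq_fintype_card] using Set.ncard_le_card (f ⁻¹' S')
    · exact (ncard_preimage_inl_mul_le_ncard_closedNbhd_addPendants S').trans hk
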